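/- For all integers k, j > 0 one has Kₖ ∘ W ∘ Kⱼ = −Kₖ₊ⱼ. -/

import Mathlib

/-!
Compute `K_k` on the circle `|u| = r/2` and `K_j` on `|v| = r`; by Cauchy's theorem on the
annulus this does not change `K_k`. The resolvent identity `R u - R v = (v - u) R u W R v` turns
`K_k W K_j` into a double integral of `u^(-k) v^(-j) (v - u)⁻¹ (R u - R v)`. In the `R u` term the
`v`-integral of `v^(-j) (v - u)⁻¹` vanishes, because `j ≥ 1` and `|u| < r`. In the `R v` term,
after Fubini, the `u`-integral of `u^(-k) (v - u)⁻¹` equals `2πi v^(-k)`, because `|v| > r/2`;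
what remains is `-K_{k+j}`.
-/

open Complex MeasureTheory

/-- The `j`-th Laurent coefficient `K_j = (2πi)⁻¹ ∮_{|v|=r} v^(-j) R(v) dv` of the
resolvent function `R`. -/
noncomputable def laurentK {H : Type*} [NormedAddCommGroup H] [NormedSpace ℂ H]
    (R : ℂ → (H →L[ℂ] H)) (r : ℝ) (j : ℤ) : H →L[ℂ] H :=
  (2 * (Real.pi : ℂ) * Complex.I)⁻¹ • ∮ v in C(0, r), v ^ (-j) • R v

open Metric Real

section CircleIntegral

theorem circleIntegral.integral_neg {E : Type*} [NormedAddCommGroup E] [NormedSpace ℂ E]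
    (f : ℂ → E) (c : ℂ) (R : ℝ) : ∮ z in C(c, R), -f z = -∮ z in C(c, R), f z := by
  simp only [circleIntegral, smul_neg, intervalIntegral.integral_neg]

theorem ContinuousLinearMap.circleIntegral_comp_comm {E F : Type*} [NormedAddCommGroup E]
    [NormedSpace ℂ E] [CompleteSpace E] [NormedAddCommGroup F] [NormedSpace ℂ F] [CompleteSpace F]
    (L : E →L[ℂ] F) {f : ℂ → E} {c : ℂ} {R : ℝ} (hf : CircleIntegrable f c R) :
    ∮ z in C(c, R), L (f z) = L (∮ z in C(c, R), f z) := by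
  simp only [circleIntegral, ← L.map_smul]
  exact L.intervalIntegral_comp_comm hf.out

section Algebra

variable {A : Type*} [NormedRing A] [NormedAlgebra ℂ A] [CompleteSpace A]

theorem circleIntegral.integral_const_mul_of_integrable (a : A) {f : ℂ → A} {c : ℂ} {R : ℝ}
    (hf : CircleIntegrable f c R) : ∮ z in C(c, R), a * f z = a * ∮ z in C(c, R), f z :=
  (ContinuousLinearMap.mul ℂ A a).circleIntegral_comp_comm hf

theorem circleIntegral.integral_mul_const_of_integrable (a : A) {f : ℂ → A} {c : ℂ} {R : ℝ}
    (hf : CircleIntegrable f c R) : ∮ z in C(c, R), f z * a = (∮ z in C(c, R), f z) * a :=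
  ((ContinuousLinearMap.mul ℂ A).flip a).circleIntegral_comp_comm hf

theorem circleIntegral_mul_mul_circleIntegral (a : A) {f g : ℂ → A} {c₁ c₂ : ℂ} {R₁ R₂ : ℝ}
    (hf : CircleIntegrable f c₁ R₁) (hg : CircleIntegrable g c₂ R₂) :
    (∮ z in C(c₁, R₁), f z) * a * (∮ w in C(c₂, R₂), g w) =
      ∮ z in C(c₁, R₁), ∮ w in C(c₂, R₂), f z * a * g w := by
  rw [mul_assoc, ← circleIntegral.integral_mul_const_of_integrable _ hf]
  refine congrArg (circleIntegral · c₁ R₁) (funext fun z => ?_)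
  rw [← mul_assoc, circleIntegral.integral_const_mul_of_integrable _ hg]

end Algebra

theorem circleIntegral.integral_comm {E : Type*} [NormedAddCommGroup E] [NormedSpace ℂ E]
    {f : ℂ → ℂ → E} {c₁ c₂ : ℂ} {R₁ R₂ : ℝ}
    (hf : ContinuousOn (Function.uncurry f) (sphere c₁ |R₁| ×ˢ sphere c₂ |R₂|)) :
    ∮ z in C(c₁, R₁), ∮ w in C(c₂, R₂), f z w = ∮ w in C(c₂, R₂), ∮ z in C(c₁, R₁), f z w := by
  have hF : Continuous fun p : ℝ × ℝ => f (circleMap c₁ R₁ p.1) (circleMap c₂ R₂ p.2) :=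
    hf.comp_continuous
      (by fun_prop : Continuous fun p : ℝ × ℝ => (circleMap c₁ R₁ p.1, circleMap c₂ R₂ p.2))
      fun p => ⟨circleMap_mem_sphere' _ _ _, circleMap_mem_sphere' _ _ _⟩
  have h2π : (0 : ℝ) ≤ 2 * π := by positivity
  simp only [circleIntegral, deriv_circleMap, ← intervalIntegral.integral_smul]
  simp only [intervalIntegral.integral_of_le h2π]
  rw [integral_integral_swap]
  · simp only [smul_comm (circleMap 0 R₁ _ * I)]
  rw [Measure.prod_restrict]
  refine (ContinuousOn.integrableOn_compact (isCompact_Icc.prod isCompact_Icc) ?_).mono_set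
    (Set.prod_mono Set.Ioc_subset_Icc_self Set.Ioc_subset_Icc_self)
  exact ((by fun_prop : Continuous fun p : ℝ × ℝ => circleMap 0 R₁ p.1 * I).smul
    ((by fun_prop : Continuous fun p : ℝ × ℝ => circleMap 0 R₂ p.2 * I).smul hF)).continuousOn

theorem circleIntegral_eq_of_differentiableOn_closedBall_diff_center {E : Type*}
    [NormedAddCommGroup E] [NormedSpace ℂ E] {f : ℂ → E} {c : ℂ} {ρ r : ℝ} (hρ : 0 < ρ)
    (hρr : ρ ≤ r) (hf : DifferentiableOn ℂ f (closedBall c r \ {c})) :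
    ∮ z in C(c, r), f z = ∮ z in C(c, ρ), f z := by
  refine circleIntegral_eq_of_differentiable_on_annulus_off_countable hρ hρr Set.countable_empty
    (hf.continuousOn.mono (Set.sdiff_subset_sdiff_right ?_)) fun z hz => hf.differentiableAt ?_
  · exact Set.singleton_subset_iff.2 (mem_ball_self hρ)
  · refine Filter.mem_of_superset ((isOpen_ball.sdiff isClosed_closedBall).mem_nhds hz.1) ?_
    exact Set.sdiff_subset_sdiff ball_subset_closedBall
      (Set.singleton_subset_iff.2 (mem_closedBall_self hρ.le))

end CircleIntegral

section ScalarIntegrals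

variable {R : ℝ} {w : ℂ}

theorem circleIntegral.integral_zpow_of_ne (R : ℝ) {n : ℤ} (hn : n ≠ -1) :
    ∮ z in C(0, R), z ^ n = 0 := by
  simpa using circleIntegral.integral_sub_zpow_of_ne hn 0 0 R

theorem circleIntegral.integral_inv (hR : R ≠ 0) : ∮ z in C(0, R), z⁻¹ = 2 * π * I := by
  simpa using circleIntegral.integral_sub_center_inv 0 hR

theorem circleIntegrable_zpow (hR : 0 < R) (n : ℤ) : CircleIntegrable (fun z => z ^ n) 0 R :=
  ContinuousOn.circleIntegrable hR.le fun z hz =>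
    (continuousAt_zpow₀ z n (.inl (ne_of_mem_sphere hz hR.ne'))).continuousWithinAt

theorem circleIntegrable_zpow_smul {E : Type*} [NormedAddCommGroup E] [NormedSpace ℂ E]
    {f : ℂ → E} (hR : 0 < R) (hf : ContinuousOn f (sphere 0 R)) (n : ℤ) :
    CircleIntegrable (fun z => z ^ n • f z) 0 R :=
  (circleIntegrable_zpow hR n).smul_continuousOn (by rwa [abs_of_pos hR])

theorem circleIntegrable_zpow_mul_sub_inv (hR : 0 < R) (hw : ‖w‖ ≠ R) (n : ℤ) :
    CircleIntegrable (fun z => z ^ n * (z - w)⁻¹) 0 R := by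
  refine (circleIntegrable_zpow hR n).mul_continuousOn fun z hz => ?_
  have hzw : z - w ≠ 0 :=
    sub_ne_zero.2 (by rintro rfl; exact hw (by simpa [abs_of_pos hR] using hz))
  exact ContinuousAt.continuousWithinAt (by fun_prop (disch := assumption))

theorem mul_zpow_neg_succ_mul_sub_inv {z : ℂ} (w : ℂ) (hz : z ≠ 0) (hzw : z ≠ w) (n : ℤ) :
    w * (z ^ (-(n + 1)) * (z - w)⁻¹) = z ^ (-n) * (z - w)⁻¹ - z ^ (-(n + 1)) := by
  have : z - w ≠ 0 := sub_ne_zero.2 hzw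
  rw [neg_add, zpow_add₀ hz, zpow_neg_one]
  field_simp
  ring

theorem mul_circleIntegral_zpow_neg_succ_mul_sub_inv (hR : 0 < R) (hw : ‖w‖ ≠ R) (n : ℤ) :
    w * ∮ z in C(0, R), z ^ (-(n + 1)) * (z - w)⁻¹ =
      (∮ z in C(0, R), z ^ (-n) * (z - w)⁻¹) - ∮ z in C(0, R), z ^ (-(n + 1)) := by
  rw [← circleIntegral.integral_const_mul, ← circleIntegral.integral_sub
    (circleIntegrable_zpow_mul_sub_inv hR hw _) (circleIntegrable_zpow hR _)]
  refine circleIntegral.integral_congr hR.le fun z hz => ?_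
  exact mul_zpow_neg_succ_mul_sub_inv w (ne_of_mem_sphere hz hR.ne')
    (by rintro rfl; exact hw (by simpa [hR.le] using hz)) n

theorem circleIntegral_zpow_neg_mul_sub_inv_of_norm_lt (hw : ‖w‖ < R) {n : ℤ} (hn : 0 < n) :
    ∮ z in C(0, R), z ^ (-n) * (z - w)⁻¹ = 0 := by
  have hR : 0 < R := (norm_nonneg w).trans_lt hw
  have step := mul_circleIntegral_zpow_neg_succ_mul_sub_inv hR hw.ne
  rcases eq_or_ne w 0 with rfl | hw0
  · have h := step n
    rw [zero_mul, circleIntegral.integral_zpow_of_ne R (by omega), sub_zero] at h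
    exact h.symm
  induction n, (show 1 ≤ n from hn) using Int.leInduction with
  | base =>
    have h := step 0
    simp only [zero_add, neg_zero, zpow_zero, one_mul, zpow_neg_one] at h ⊢
    rw [circleIntegral.integral_sub_inv_of_mem_ball (by simpa using hw),
      circleIntegral.integral_inv hR.ne', sub_self] at h
    exact (mul_eq_zero.1 h).resolve_left hw0
  | succ n hn ih =>
    have h := step n
    rw [ih (by omega), circleIntegral.integral_zpow_of_ne R (by omega), sub_self] at h
    exact (mul_eq_zero.1 h).resolve_left hw0

theorem circleIntegral_zpow_neg_mul_sub_inv_of_lt_norm (hR : 0 < R) (hw : R < ‖w‖) {n : ℤ}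
    (hn : 0 < n) : ∮ z in C(0, R), z ^ (-n) * (z - w)⁻¹ = -(2 * π * I * w ^ (-n)) := by
  have step := mul_circleIntegral_zpow_neg_succ_mul_sub_inv hR hw.ne'
  have hw0 : w ≠ 0 := norm_pos_iff.1 (hR.trans hw)
  induction n, (show 1 ≤ n from hn) using Int.leInduction with
  | base =>
    have h := step 0
    simp only [zero_add, neg_zero, zpow_zero, one_mul, zpow_neg_one] at h ⊢
    have hzero : ∮ z in C(0, R), (z - w)⁻¹ = 0 := by
      refine DiffContOnCl.circleIntegral_eq_zero hR.le
        (DifferentiableOn.diffContOnCl fun z hz => ?_)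
      have hzw : z - w ≠ 0 := sub_ne_zero.2 <| by
        rintro rfl
        exact hw.not_ge (by simpa using closure_ball_subset_closedBall hz)
      exact (DifferentiableAt.differentiableWithinAt (by fun_prop (disch := assumption)))
    rw [hzero, circleIntegral.integral_inv hR.ne', zero_sub] at h
    rw [eq_inv_mul_iff_mul_eq₀ hw0 |>.2 h]
    ring
  | succ n hn ih =>
    have h := step n
    rw [ih (by omega), circleIntegral.integral_zpow_of_ne R (by omega), sub_zero] at h
    rw [eq_inv_mul_iff_mul_eq₀ hw0 |>.2 h, neg_add, zpow_add₀ hw0, zpow_neg_one]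
    ring

end ScalarIntegrals

section LaurentKernel

variable {ρ r : ℝ} {k j : ℤ}

noncomputable def laurentKernel (k j : ℤ) (u v : ℂ) : ℂ := u ^ (-k) * v ^ (-j) * (v - u)⁻¹

theorem sub_ne_zero_of_mem_sphere_of_mem_sphere {u v : ℂ} (hρr : ρ ≠ r)
    (hu : u ∈ sphere (0 : ℂ) ρ) (hv : v ∈ sphere (0 : ℂ) r) : v - u ≠ 0 := by
  rw [mem_sphere_zero_iff_norm] at hu hv
  rw [sub_ne_zero]
  rintro rfl
  exact hρr (hu.symm.trans hv)

theorem continuousOn_laurentKernel (hρ : 0 < ρ) (hr : 0 < r) (hρr : ρ ≠ r) (k j : ℤ) :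
    ContinuousOn (fun p : ℂ × ℂ => laurentKernel k j p.1 p.2) (sphere 0 ρ ×ˢ sphere 0 r) := by
  rintro ⟨u, v⟩ ⟨hu, hv⟩
  have : u ≠ 0 ∨ 0 ≤ -k := .inl (ne_of_mem_sphere hu hρ.ne')
  have : v ≠ 0 ∨ 0 ≤ -j := .inl (ne_of_mem_sphere hv hr.ne')
  have := sub_ne_zero_of_mem_sphere_of_mem_sphere hρr hu hv
  exact ContinuousAt.continuousWithinAt (by unfold laurentKernel; fun_prop (disch := assumption))

theorem circleIntegral_laurentKernel_right {u : ℂ} (hu : ‖u‖ < r) (k : ℤ) (hj : 0 < j) :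
    ∮ v in C(0, r), laurentKernel k j u v = 0 := by
  simp only [laurentKernel, mul_assoc, circleIntegral.integral_const_mul,
    circleIntegral_zpow_neg_mul_sub_inv_of_norm_lt hu hj, mul_zero]

theorem circleIntegral_laurentKernel_left (hρ : 0 < ρ) {v : ℂ} (hv : ρ < ‖v‖) (hk : 0 < k)
    (j : ℤ) : ∮ u in C(0, ρ), laurentKernel k j u v = 2 * π * I * v ^ (-(k + j)) := by
  have hv0 : v ≠ 0 := norm_pos_iff.1 (hρ.trans hv)
  have hκ : ∀ u, laurentKernel k j u v = -v ^ (-j) * (u ^ (-k) * (u - v)⁻¹) := fun u => by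
    rw [laurentKernel, ← neg_sub u v, inv_neg]
    ring
  simp only [hκ]
  rw [circleIntegral.integral_const_mul, circleIntegral_zpow_neg_mul_sub_inv_of_lt_norm hρ hv hk,
    neg_add, zpow_add₀ hv0]
  ring

end LaurentKernel

theorem laurentK_eq_of_differentiableOn {H : Type*} [NormedAddCommGroup H] [NormedSpace ℂ H]
    {R : ℂ → H →L[ℂ] H} {ρ r : ℝ} (hR : DifferentiableOn ℂ R (closedBall 0 r \ {0}))
    (hρ : 0 < ρ) (hρr : ρ ≤ r) (j : ℤ) : laurentK R r j = laurentK R ρ j := by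
  refine congrArg _ (circleIntegral_eq_of_differentiableOn_closedBall_diff_center hρ hρr
    fun v hv => ?_)
  exact ((differentiableAt_zpow.2 (.inl hv.2)).differentiableWithinAt).smul (hR v hv)

section LaurentCoefficients

variable {H : Type*} [NormedAddCommGroup H] [NormedSpace ℂ H] [CompleteSpace H]
  {R : ℂ → H →L[ℂ] H} {W : H →L[ℂ] H} {ρ r : ℝ} {k j : ℤ}

theorem laurentK_mul_mul_laurentK_eq_smul_circleIntegral (hρ : 0 < ρ) (hr : 0 < r)
    (hρr : ρ ≠ r) (hRρ : ContinuousOn R (sphere 0 ρ)) (hRr : ContinuousOn R (sphere 0 r))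
    (hres : ∀ u ∈ sphere (0 : ℂ) ρ, ∀ v ∈ sphere (0 : ℂ) r, R u - R v = (v - u) • (R u * W * R v)) :
    laurentK R ρ k * W * laurentK R r j = ((2 * π * I)⁻¹ * (2 * π * I)⁻¹) •
      ∮ u in C(0, ρ), ∮ v in C(0, r), laurentKernel k j u v • (R u - R v) := by
  unfold laurentK
  simp only [smul_mul_assoc, mul_smul_comm, smul_smul]
  rw [circleIntegral_mul_mul_circleIntegral W (circleIntegrable_zpow_smul hρ hRρ _)
    (circleIntegrable_zpow_smul hr hRr _)]
  congr 1
  refine circleIntegral.integral_congr hρ.le fun u hu => circleIntegral.integral_congr hr.le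
    fun v hv => ?_
  simp only [smul_mul_assoc, mul_smul_comm, smul_smul]
  rw [hres u hu v hv, smul_smul, laurentKernel,
    inv_mul_cancel_right₀ (sub_ne_zero_of_mem_sphere_of_mem_sphere hρr hu hv), mul_comm]

theorem laurentK_mul_mul_laurentK_of_sub_eq_smul (hρ : 0 < ρ) (hρr : ρ < r)
    (hRρ : ContinuousOn R (sphere 0 ρ)) (hRr : ContinuousOn R (sphere 0 r))
    (hres : ∀ u ∈ sphere (0 : ℂ) ρ, ∀ v ∈ sphere (0 : ℂ) r, R u - R v = (v - u) • (R u * W * R v))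
    (hk : 0 < k) (hj : 0 < j) :
    laurentK R ρ k * W * laurentK R r j = -laurentK R r (k + j) := by
  have hr : 0 < r := hρ.trans hρr
  have hκ := continuousOn_laurentKernel hρ hr hρr.ne k j
  have hinner : ∀ u ∈ sphere (0 : ℂ) ρ, ∮ v in C(0, r), laurentKernel k j u v • (R u - R v) =
      -∮ v in C(0, r), laurentKernel k j u v • R v := by
    intro u hu
    have hκu : ContinuousOn (laurentKernel k j u) (sphere 0 r) :=
      hκ.comp (f := fun v => (u, v)) (by fun_prop) fun v hv => ⟨hu, hv⟩
    have hcont_u : ContinuousOn (fun v => laurentKernel k j u v • R u) (sphere 0 r) :=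
      hκu.smul continuousOn_const
    have hcont_v : ContinuousOn (fun v => laurentKernel k j u v • R v) (sphere 0 r) :=
      hκu.smul hRr
    simp only [smul_sub]
    rw [circleIntegral.integral_sub (hcont_u.circleIntegrable hr.le)
      (hcont_v.circleIntegrable hr.le), circleIntegral.integral_smul_const,
      circleIntegral_laurentKernel_right (by rw [mem_sphere_zero_iff_norm.1 hu]; exact hρr) k hj,
      zero_smul, zero_sub]
  have houter : ∀ v ∈ sphere (0 : ℂ) r, ∮ u in C(0, ρ), laurentKernel k j u v • R v =
      (2 * π * I) • v ^ (-(k + j)) • R v := by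
    intro v hv
    rw [circleIntegral.integral_smul_const, smul_smul, circleIntegral_laurentKernel_left hρ
      (by rw [mem_sphere_zero_iff_norm.1 hv]; exact hρr) hk]
  have hswap : ∮ u in C(0, ρ), ∮ v in C(0, r), laurentKernel k j u v • R v =
      ∮ v in C(0, r), ∮ u in C(0, ρ), laurentKernel k j u v • R v := by
    refine circleIntegral.integral_comm ?_
    rw [abs_of_pos hρ, abs_of_pos hr]
    exact hκ.smul (hRr.comp continuousOn_snd fun p hp => hp.2)
  rw [laurentK_mul_mul_laurentK_eq_smul_circleIntegral hρ hr hρr.ne hRρ hRr hres,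
    circleIntegral.integral_congr hρ.le hinner, circleIntegral.integral_neg, hswap,
    circleIntegral.integral_congr hr.le houter, circleIntegral.integral_smul, smul_neg, smul_smul,
    mul_assoc, inv_mul_cancel₀ two_pi_I_ne_zero, mul_one, laurentK]

end LaurentCoefficients

theorem sub_eq_mul_sub_mul_of_mul_eq_one {A : Type*} [Ring A] {a b x y : A} (hx : x * a = 1)
    (hy : b * y = 1) : x - y = x * (b - a) * y := by
  rw [mul_sub, sub_mul, mul_assoc, hy, hx, mul_one, one_mul]

theorem DifferentiableOn.of_mul_eq_one {𝕜 A : Type*} [NontriviallyNormedField 𝕜] [NormedRing A]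
    [NormedAlgebra 𝕜 A] [CompleteSpace A] {f g : 𝕜 → A} {s : Set 𝕜}
    (hf : DifferentiableOn 𝕜 f s) (hfg : ∀ z ∈ s, f z * g z = 1 ∧ g z * f z = 1) :
    DifferentiableOn 𝕜 g s := fun z hz => by
  have hinv : ∀ z ∈ s, Ring.inverse (f z) = g z := fun z hz =>
    Ring.inverse_unit ⟨f z, g z, (hfg z hz).1, (hfg z hz).2⟩
  exact ((hf z hz).inverse ⟨⟨f z, g z, (hfg z hz).1, (hfg z hz).2⟩, rfl⟩).congr
    (fun y hy => (hinv y hy).symm) (hinv z hz).symm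

/-- For all integers `k, j > 0` one has `Kₖ ∘ W ∘ Kⱼ = −Kₖ₊ⱼ`. -/
theorem laurentK_pos_comp_perturbation_comp_laurentK_pos
    {H : Type*} [NormedAddCommGroup H] [InnerProductSpace ℂ H] [CompleteSpace H]
    (N₀ W : H →L[ℂ] H) (z₀ : ℂ) (r : ℝ) (hr : 0 < r)
    (R : ℂ → (H →L[ℂ] H))
    (hR : ∀ v : ℂ, v ≠ 0 → ‖v‖ ≤ r →
      (N₀ + v • W - z₀ • (1 : H →L[ℂ] H)) * R v = 1 ∧
      R v * (N₀ + v • W - z₀ • (1 : H →L[ℂ] H)) = 1)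
    (k j : ℤ) (hk : 0 < k) (hj : 0 < j) :
    laurentK R r k * W * laurentK R r j = -(laurentK R r (k + j)) := by
  set A : ℂ → H →L[ℂ] H := fun v => N₀ + v • W - z₀ • 1
  have hAR : ∀ v ∈ closedBall (0 : ℂ) r \ {0}, A v * R v = 1 ∧ R v * A v = 1 := fun v hv =>
    hR v hv.2 (mem_closedBall_zero_iff.1 hv.1)
  have hdiff : DifferentiableOn ℂ R (closedBall 0 r \ {0}) :=
    (by fun_prop : Differentiable ℂ A).differentiableOn.of_mul_eq_one hAR
  have hsphere : ∀ {s : ℝ}, 0 < s → s ≤ r → sphere (0 : ℂ) s ⊆ closedBall 0 r \ {0} :=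
    fun hs hsr v hv => ⟨closedBall_subset_closedBall hsr (sphere_subset_closedBall hv),
      ne_of_mem_sphere hv hs.ne'⟩
  have hρ : 0 < r / 2 := half_pos hr
  have hρr : r / 2 < r := half_lt_self hr
  have hres : ∀ u ∈ sphere (0 : ℂ) (r / 2), ∀ v ∈ sphere (0 : ℂ) r,
      R u - R v = (v - u) • (R u * W * R v) := fun u hu v hv => by
    rw [sub_eq_mul_sub_mul_of_mul_eq_one (hAR u (hsphere hρ hρr.le hu)).2
      (hAR v (hsphere hr le_rfl hv)).1, sub_sub_sub_cancel_right, add_sub_add_left_eq_sub,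
      ← sub_smul, mul_smul_comm, smul_mul_assoc]
  rw [laurentK_eq_of_differentiableOn hdiff hρ hρr.le k]
  exact laurentK_mul_mul_laurentK_of_sub_eq_smul hρ hρr
    (hdiff.continuousOn.mono (hsphere hρ hρr.le)) (hdiff.continuousOn.mono (hsphere hr le_rfl))
    hres hk hj
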